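/- Let D₆ be the symmetric 6×6 matrix with rows (1,1,1,1,1,1), (1,−1,i,−i,−i,i), (1,i,−1,i,−i,−i), (1,−i,i,−1,i,−i), (1,−i,−i,i,−1,i), (1,i,−i,−i,i,−1). For every real number c, the matrix D₆⁽¹⁾(c) obtained from D₆ by multiplying the entries at positions (3,4), (3,5), (6,4), (6,5) by e^{ic} and the entries at positions (4,3), (4,6), (5,3), (5,6) by e^{−ic} is a dephased complex Hadamard matrix of order 6, and D₆⁽¹⁾(−c) equals the transpose of D₆⁽¹⁾(c). -/

import Mathlib

open Matrix

/-- A complex Hadamard matrix: all entries of modulus one, and `H * Hᴴ = N • 1`. -/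
def IsComplexHadamard {n : Type*} [Fintype n] [DecidableEq n] (H : Matrix n n ℂ) : Prop :=
  (∀ i j, ‖H i j‖ = 1) ∧
    H * H.conjTranspose = (Fintype.card n : ℂ) • (1 : Matrix n n ℂ)

/-- Dephased w.r.t. the distinguished index `i0`. -/
def IsDephased {n : Type*} (H : Matrix n n ℂ) (i0 : n) : Prop :=
  (∀ j, H i0 j = 1) ∧ (∀ i, H i i0 = 1)

/-- The one-parameter family `D₆⁽¹⁾(c)`: the matrix `D₆` with entries at positions
(3,4), (3,5), (6,4), (6,5) multiplied by `e^{ic}` and entries at positions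
(4,3), (4,6), (5,3), (5,6) multiplied by `e^{−ic}` (1-based indexing). -/
noncomputable def D6fam (c : ℝ) : Matrix (Fin 6) (Fin 6) ℂ :=
  !![1, 1, 1, 1, 1, 1;
     1, -1, Complex.I, -Complex.I, -Complex.I, Complex.I;
     1, Complex.I, -1,
        Complex.I * Complex.exp (Complex.I * c),
        -Complex.I * Complex.exp (Complex.I * c), -Complex.I;
     1, -Complex.I,
        Complex.I * Complex.exp (-(Complex.I * c)), -1, Complex.I,
        -Complex.I * Complex.exp (-(Complex.I * c));
     1, -Complex.I,
        -Complex.I * Complex.exp (-(Complex.I * c)), Complex.I, -1,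
        Complex.I * Complex.exp (-(Complex.I * c));
     1, Complex.I, -Complex.I,
        -Complex.I * Complex.exp (Complex.I * c),
        Complex.I * Complex.exp (Complex.I * c), -1]

@[simp]
lemma cons_val_five {α : Type*} {m : ℕ} (x : α) (u : Fin (m+5) → α) :
    Matrix.vecCons x u 5 = Matrix.vecHead (Matrix.vecTail (Matrix.vecTail (Matrix.vecTail (Matrix.vecTail u)))) :=
  rfl

set_option maxHeartbeats 4000000 in
/-- For every real `c`, `D₆⁽¹⁾(c)` is a dephased complex Hadamard
matrix of order `6`, and `D₆⁽¹⁾(−c)` equals the transpose of `D₆⁽¹⁾(c)`. -/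
theorem D6fam_hadamard (c : ℝ) :
    IsComplexHadamard (D6fam c) ∧ IsDephased (D6fam c) 0 ∧
    D6fam (-c) = (D6fam c)ᵀ := by
  have hconj : (starRingEnd ℂ) (Complex.exp (Complex.I * c)) = Complex.exp (-(Complex.I * c)) := by
    rw [← Complex.exp_conj]; simp [Complex.conj_I, neg_mul]
  have hconj' : (starRingEnd ℂ) (Complex.exp (-(Complex.I * c))) = Complex.exp (Complex.I * c) := by
    rw [← Complex.exp_conj]; simp [Complex.conj_I, neg_mul]
  have hmul : Complex.exp (Complex.I * c) * Complex.exp (-(Complex.I * c)) = 1 := by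
    rw [← Complex.exp_add]; simp
  have hmul' : Complex.exp (-(Complex.I * c)) * Complex.exp (Complex.I * c) = 1 := by
    rw [← Complex.exp_add]; simp
  refine ⟨⟨?_, ?_⟩, ⟨?_, ?_⟩, ?_⟩
  · intro i j
    fin_cases i <;> fin_cases j <;>
      simp [D6fam, Matrix.cons_val_succ, cons_val_five, Matrix.vecHead, Matrix.vecTail,
        Complex.norm_exp]
  · ext i j
    fin_cases i <;> fin_cases j <;>
      simp [D6fam, Matrix.mul_apply, Fin.sum_univ_six, Matrix.cons_val_succ, cons_val_five,
        Matrix.vecHead, Matrix.vecTail, hconj, hconj', Matrix.one_apply] <;>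
      ring_nf <;>
      simp [hmul, hmul', Complex.I_sq, Complex.ext_iff] <;> ring
  · intro j; fin_cases j <;> simp [D6fam]
  · intro i; fin_cases i <;> simp [D6fam, Matrix.vecHead, Matrix.vecTail]
  · ext i j
    fin_cases i <;> fin_cases j <;>
      simp [D6fam, Matrix.cons_val_succ, cons_val_five, Matrix.vecHead, Matrix.vecTail,
        Matrix.transpose_apply, neg_mul, Complex.ofReal_neg, mul_neg]
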